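/- arXiv:2012.05121 — 2 statements merged into one kernel-verified Lean document; each statement's English description precedes it below -/
import Mathlib

section
/- For every n ∈ ℕ, with ω = (−1 + √−3)/2 ∈ ℂ a primitive cube root of unity, one has (−1)^n · T_n = Σ_{k=0}^{n} C(n,k)^2 · ω^{2k−n}, and the same identity holds with ω replaced by its complex conjugate ω̄. -/
open Complex in
/-- `ω = (-1 + √-3)/2`, a primitive cube root of unity. -/
noncomputable def omegaC : ℂ := (-1 + Real.sqrt 3 * Complex.I) / 2

/-- The central trinomial coefficient: the coefficient of `x^n` in `(x^2+x+1)^n`. -/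
def centralTrinomial (n : ℕ) : ℕ :=
  ∑ k ∈ Finset.range (n / 2 + 1), Nat.choose n (2 * k) * Nat.choose (2 * k) k

/-!
A root `w` of `x² + x + 1` in a field satisfies `x² + x + 1 = (x - w)(x - w⁻¹)`. Comparing
coefficients of `xⁿ` in `(x² + x + 1)ⁿ = (x - w)ⁿ (x - w⁻¹)ⁿ`: on the right a Vandermonde-type
convolution gives `Σ C(n,k)² (-w⁻¹)ⁿ⁻ᵏ (-w)ᵏ = (-1)ⁿ Σ C(n,k)² w^(2k-n)`; on the left, expanding
`((x² + 1) + x)ⁿ` gives `Σ C(n,2j) C(2j,j) = Tₙ`. Both `ω` and `ω̄` are such roots.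
-/

open Polynomial Finset

theorem sum_range_succ_ite_two_dvd {M : Type*} [AddCommMonoid M] (f : ℕ → M) (n : ℕ) :
    ∑ m ∈ range (n + 1), (if 2 ∣ m then f m else 0) = ∑ j ∈ range (n / 2 + 1), f (2 * j) := by
  have hevens : (range (n + 1)).filter (2 ∣ ·) = (range (n / 2 + 1)).image (2 * ·) := by
    ext m
    simp only [mem_filter, mem_range, mem_image]
    constructor
    · rintro ⟨hm, j, rfl⟩
      exact ⟨j, by omega, rfl⟩
    · rintro ⟨j, hj, rfl⟩
      exact ⟨by omega, dvd_mul_right 2 j⟩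
  rw [← sum_filter, hevens, sum_image fun i _ j _ h => by simpa using h]

section Coefficients

variable {R : Type*} [CommSemiring R]

theorem coeff_X_sq_add_one_pow (m k : ℕ) :
    ((X ^ 2 + 1 : R[X]) ^ m).coeff k = if 2 ∣ k then (m.choose (k / 2) : R) else 0 := by
  have hexpand : (X ^ 2 + 1 : R[X]) ^ m = expand R 2 ((X + 1) ^ m) := by simp
  rw [hexpand, coeff_expand two_pos, coeff_X_add_one_pow]

theorem coeff_X_sq_add_X_add_one_pow_self (n : ℕ) :
    ((X ^ 2 + X + 1 : R[X]) ^ n).coeff n = centralTrinomial n := by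
  calc ((X ^ 2 + X + 1 : R[X]) ^ n).coeff n
      = ∑ m ∈ range (n + 1), if 2 ∣ m then (n.choose m * m.choose (m / 2) : R) else 0 := by
        rw [add_right_comm, add_pow, finsetSum_coeff]
        refine sum_congr rfl fun m hm => ?_
        have hm : m ≤ n := Nat.lt_succ_iff.mp (mem_range.mp hm)
        rw [← C_eq_natCast, coeff_mul_C, coeff_mul_X_pow', if_pos (Nat.sub_le n m),
          Nat.sub_sub_self hm, coeff_X_sq_add_one_pow]
        split_ifs <;> simp [mul_comm]
    _ = ∑ j ∈ range (n / 2 + 1), (n.choose (2 * j) * (2 * j).choose (2 * j / 2) : R) :=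
        sum_range_succ_ite_two_dvd _ n
    _ = centralTrinomial n := by simp [centralTrinomial]

theorem coeff_X_add_C_pow_mul_X_add_C_pow_self (a b : R) (n : ℕ) :
    ((X + C a) ^ n * (X + C b) ^ n).coeff n
      = ∑ k ∈ range (n + 1), (n.choose k : R) ^ 2 * (a ^ (n - k) * b ^ k) := by
  rw [coeff_mul, Nat.sum_antidiagonal_eq_sum_range_succ_mk]
  refine sum_congr rfl fun k hk => ?_
  have hk : k ≤ n := Nat.lt_succ_iff.mp (mem_range.mp hk)
  rw [coeff_X_add_C_pow, coeff_X_add_C_pow, Nat.choose_symm hk, Nat.sub_sub_self hk]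
  ring

end Coefficients

theorem centralTrinomial_eq_sum_choose_sq_mul_pow {R : Type*} [CommSemiring R] {a b : R}
    (hmul : a * b = 1) (hadd : a + b = 1) (n : ℕ) :
    (centralTrinomial n : R)
      = ∑ k ∈ range (n + 1), (n.choose k : R) ^ 2 * (a ^ (n - k) * b ^ k) := by
  have hfactor : (X + C a) * (X + C b) = (X ^ 2 + X + 1 : R[X]) := by
    calc (X + C a) * (X + C b) = X ^ 2 + C (a + b) * X + C (a * b) := by
          simp only [map_add, map_mul]; ring
      _ = X ^ 2 + X + 1 := by rw [hadd, hmul, C_1, one_mul]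
  rw [← coeff_X_sq_add_X_add_one_pow_self, ← hfactor, mul_pow,
    coeff_X_add_C_pow_mul_X_add_C_pow_self]

theorem neg_inv_pow_mul_neg_pow_eq_neg_one_pow_mul_zpow {K : Type*} [Field K] {w : K} (hw : w ≠ 0)
    {k n : ℕ} (hk : k ≤ n) : (-w⁻¹) ^ (n - k) * (-w) ^ k = (-1) ^ n * w ^ ((2 * k : ℤ) - n) := by
  obtain ⟨m, rfl⟩ := Nat.exists_eq_add_of_le hk
  have hexp : (2 * k : ℤ) - (k + m : ℕ) = k - m := by push_cast; ring
  rw [hexp, zpow_sub₀ hw, zpow_natCast, zpow_natCast, Nat.add_sub_cancel_left, neg_pow w⁻¹,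
    neg_pow w, pow_add, inv_pow]
  field_simp

theorem neg_one_pow_mul_centralTrinomial_eq_sum_choose_sq_mul_zpow {K : Type*} [Field K] {w : K}
    (hw : w ^ 2 + w + 1 = 0) (n : ℕ) :
    (-1 : K) ^ n * centralTrinomial n
      = ∑ k ∈ range (n + 1), (n.choose k : K) ^ 2 * w ^ ((2 * k : ℤ) - n) := by
  have hw0 : w ≠ 0 := by rintro rfl; simp at hw
  have hmul : -w⁻¹ * -w = 1 := by rw [neg_mul_neg, inv_mul_cancel₀ hw0]
  have hadd : -w⁻¹ + -w = 1 := by field_simp; linear_combination -hw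
  have hsign : (-1 : K) ^ n * (-1) ^ n = 1 := by rw [← pow_add, Even.neg_one_pow ⟨n, rfl⟩]
  rw [centralTrinomial_eq_sum_choose_sq_mul_pow hmul hadd, mul_sum]
  refine sum_congr rfl fun k hk => ?_
  rw [neg_inv_pow_mul_neg_pow_eq_neg_one_pow_mul_zpow hw0 (Nat.lt_succ_iff.mp (mem_range.mp hk))]
  linear_combination ((n.choose k : K) ^ 2 * w ^ ((2 * k : ℤ) - n)) * hsign

theorem omegaC_sq_add_omegaC_add_one : omegaC ^ 2 + omegaC + 1 = 0 := by
  have hsqrt : ((Real.sqrt 3 : ℝ) : ℂ) ^ 2 = 3 := by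
    rw [← Complex.ofReal_pow, Real.sq_sqrt (by norm_num)]
    norm_num
  unfold omegaC
  linear_combination (Complex.I ^ 2 / 4) * hsqrt + (3 / 4) * Complex.I_sq

theorem trinomial_omega_representation (n : ℕ) :
    ((-1 : ℂ) ^ n * centralTrinomial n
        = ∑ k ∈ Finset.range (n + 1), (Nat.choose n k : ℂ) ^ 2
            * omegaC ^ ((2 * k : ℤ) - n)) ∧
    ((-1 : ℂ) ^ n * centralTrinomial n
        = ∑ k ∈ Finset.range (n + 1), (Nat.choose n k : ℂ) ^ 2
            * (starRingEnd ℂ omegaC) ^ ((2 * k : ℤ) - n)) := by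
  have hconj : (starRingEnd ℂ omegaC) ^ 2 + starRingEnd ℂ omegaC + 1 = 0 := by
    simpa using congrArg (starRingEnd ℂ) omegaC_sq_add_omegaC_add_one
  exact ⟨neg_one_pow_mul_centralTrinomial_eq_sum_choose_sq_mul_zpow omegaC_sq_add_omegaC_add_one n,
    neg_one_pow_mul_centralTrinomial_eq_sum_choose_sq_mul_zpow hconj n⟩
end

section
/- Let p > 3 be a prime. Then Σ_{j=1}^{⌊(p−1)/3⌋} 1/j^2 ≡ (1/2) · (p/3) · B_{p−2}(1/3) (mod p), i.e., the p-adic valuation of the rational number Σ_{j=1}^{⌊(p−1)/3⌋} 1/j^2 − (1/2)(p/3)B_{p−2}(1/3) is at least 1. -/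
/-!
Let `m = ⌊(p - 1)/3⌋`. By Fermat, `1/j² ≡ j^(p-3) (mod p)` for `1 ≤ j ≤ m`, and Faulhaber's formula
gives `(p - 2) ∑_{j ≤ m} j^(p-3) = B_{p-2}(m + 1)` because the Bernoulli number `B_{p-2}` vanishes.
The Bernoulli numbers `B_k` with `k ≤ p - 2` are `p`-integral (by their recurrence, whose leading
coefficient `k + 1` is a `p`-adic unit), so `B_{p-2}` has `p`-integral coefficients and
`B_{p-2}(m + 1) ≡ B_{p-2}(k/3)`, where `3(m + 1) = p + k` with `k = 2` if `p ≡ 1` and `k = 1` if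
`p ≡ 2 (mod 3)`. The reflection `B_{p-2}(1 - x) = -B_{p-2}(x)` turns `B_{p-2}(k/3)` into
`-(p/3) B_{p-2}(1/3)`, and `p - 2 ≡ -2` gives the result.
-/

open Finset

namespace Padic

variable {p : ℕ} [Fact p.Prime]

theorem norm_natCast_le_one (n : ℕ) : ‖(n : ℚ_[p])‖ ≤ 1 := mod_cast norm_int_le_one n

theorem norm_natCast_eq_one_of_lt {n : ℕ} (hn : n ≠ 0) (hnp : n < p) : ‖(n : ℚ_[p])‖ = 1 :=
  norm_natCast_eq_one_iff.2 (Nat.coprime_of_lt_prime hn hnp Fact.out)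

theorem norm_bernoulli_le_one {k : ℕ} (hk : k + 1 < p) : ‖(bernoulli k : ℚ_[p])‖ ≤ 1 := by
  induction k using Nat.strong_induction_on with
  | _ k ih =>
  rcases Nat.eq_zero_or_pos k with rfl | hk0
  · simp
  have hrec := sum_bernoulli (k + 1)
  rw [if_neg (by omega), sum_range_succ, Nat.choose_succ_self_right] at hrec
  have hrec' : ((k + 1 : ℕ) : ℚ_[p]) * bernoulli k
      = -∑ i ∈ range k, ((k + 1).choose i : ℚ_[p]) * bernoulli i := by
    rw [eq_neg_iff_add_eq_zero, add_comm]
    exact_mod_cast hrec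
  calc ‖(bernoulli k : ℚ_[p])‖ = ‖((k + 1 : ℕ) : ℚ_[p]) * bernoulli k‖ := by
        rw [norm_mul, norm_natCast_eq_one_of_lt k.succ_ne_zero hk, one_mul]
    _ ≤ 1 := by
      rw [hrec', norm_neg]
      refine IsUltrametricDist.norm_sum_le_of_forall_le_of_nonneg zero_le_one fun i hi => ?_
      have hik := mem_range.1 hi
      rw [norm_mul]
      exact mul_le_one₀ (norm_natCast_le_one _) (norm_nonneg _) (ih i hik (by omega))

theorem norm_coeff_bernoulli_le_one {n : ℕ} (hn : n + 1 < p) (i : ℕ) :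
    ‖((Polynomial.bernoulli n).coeff i : ℚ_[p])‖ ≤ 1 := by
  rw [Polynomial.coeff_bernoulli]
  split_ifs with hi
  · push_cast
    rw [norm_mul]
    exact mul_le_one₀ (norm_bernoulli_le_one (by omega)) (norm_nonneg _) (norm_natCast_le_one _)
  · simp

theorem norm_eval_sub_eval_le {f : Polynomial ℚ_[p]} (hf : ∀ i, ‖f.coeff i‖ ≤ 1) {x y : ℚ_[p]}
    (hx : ‖x‖ ≤ 1) (hy : ‖y‖ ≤ 1) : ‖f.eval x - f.eval y‖ ≤ ‖x - y‖ := by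
  obtain ⟨g, rfl⟩ := (Polynomial.mem_lifts f).1 <|
    (Polynomial.lifts_iff_coeff_lifts (f := PadicInt.Coe.ringHom) f).2 fun i =>
      ⟨⟨f.coeff i, hf i⟩, rfl⟩
  obtain ⟨x, rfl⟩ : ∃ x' : ℤ_[p], PadicInt.Coe.ringHom x' = x := ⟨⟨x, hx⟩, rfl⟩
  obtain ⟨y, rfl⟩ : ∃ y' : ℤ_[p], PadicInt.Coe.ringHom y' = y := ⟨⟨y, hy⟩, rfl⟩
  obtain ⟨c, hc⟩ := Polynomial.sub_dvd_eval_sub x y g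
  rw [Polynomial.eval_map, Polynomial.eval_map, Polynomial.eval₂_at_apply,
    Polynomial.eval₂_at_apply, ← map_sub, ← map_sub, hc, map_mul, norm_mul]
  exact mul_le_of_le_one_right (norm_nonneg _) (PadicInt.norm_le_one c)

theorem norm_bernoulli_eval_sub_le {n : ℕ} (hn : n + 1 < p) {x y : ℚ}
    (hx : ‖(x : ℚ_[p])‖ ≤ 1) (hy : ‖(y : ℚ_[p])‖ ≤ 1) :
    ‖(((Polynomial.bernoulli n).eval x - (Polynomial.bernoulli n).eval y : ℚ) : ℚ_[p])‖
      ≤ ‖((x - y : ℚ) : ℚ_[p])‖ := by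
  have hcast (z : ℚ) : (((Polynomial.bernoulli n).eval z : ℚ) : ℚ_[p])
      = ((Polynomial.bernoulli n).map (Rat.castHom ℚ_[p])).eval (z : ℚ_[p]) := by
    rw [Polynomial.eval_map, ← Rat.coe_castHom, Polynomial.eval₂_at_apply]
  rw [Rat.cast_sub, Rat.cast_sub, hcast, hcast]
  refine norm_eval_sub_eval_le (fun i => ?_) hx hy
  rw [Polynomial.coeff_map, Rat.coe_castHom]
  exact norm_coeff_bernoulli_le_one hn i

theorem norm_inv_sq_sub_pow_le (hp : 3 ≤ p) {j : ℕ} (hj : p.Coprime j) :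
    ‖1 / (j : ℚ_[p]) ^ 2 - (j : ℚ_[p]) ^ (p - 3)‖ ≤ (p : ℝ)⁻¹ := by
  have hj1 : ‖(j : ℚ_[p])‖ = 1 := norm_natCast_eq_one_iff.2 hj
  have hj0 : (j : ℚ_[p]) ≠ 0 := norm_ne_zero_iff.1 (hj1 ▸ one_ne_zero)
  have hfermat : ((p : ℤ) ^ 1 : ℤ) ∣ 1 - (j : ℤ) ^ (p - 1) := by
    rw [pow_one, ← Int.modEq_iff_dvd]
    exact Int.ModEq.pow_card_sub_one_eq_one Fact.out
      ((Int.isCoprime_iff_gcd_eq_one.2 (by simpa [Nat.coprime_comm] using hj)))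
  have hsplit : 1 / (j : ℚ_[p]) ^ 2 - (j : ℚ_[p]) ^ (p - 3)
      = ((1 - (j : ℤ) ^ (p - 1) : ℤ) : ℚ_[p]) / (j : ℚ_[p]) ^ 2 := by
    rw [show p - 1 = p - 3 + 2 by omega]
    push_cast
    field_simp
    ring
  rw [hsplit, norm_div, norm_pow, hj1, one_pow, div_one, ← zpow_neg_one, ← Nat.cast_one (R := ℤ)]
  exact (norm_int_le_pow_iff_dvd _ 1).2 hfermat

theorem norm_sum_inv_sq_sub_sum_pow_le (hp : 3 ≤ p) {m : ℕ} (hm : m < p) :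
    ‖((∑ j ∈ Icc 1 m, 1 / (j : ℚ) ^ 2 - ∑ j ∈ Icc 1 m, (j : ℚ) ^ (p - 3) : ℚ) : ℚ_[p])‖
      ≤ (p : ℝ)⁻¹ := by
  push_cast
  rw [← sum_sub_distrib]
  refine IsUltrametricDist.norm_sum_le_of_forall_le_of_nonneg (by positivity) fun j hj => ?_
  have hj := mem_Icc.1 hj
  exact norm_inv_sq_sub_pow_le hp (Nat.coprime_of_lt_prime (by omega) (by omega) Fact.out)

theorem norm_sum_natCast_pow_le_one (s : Finset ℕ) (k : ℕ) :
    ‖((∑ j ∈ s, (j : ℚ) ^ k : ℚ) : ℚ_[p])‖ ≤ 1 := by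
  push_cast
  refine IsUltrametricDist.norm_sum_le_of_forall_le_of_nonneg zero_le_one fun j _ => ?_
  rw [norm_pow]
  exact pow_le_one₀ (norm_nonneg _) (norm_natCast_le_one j)

end Padic

theorem Nat.Prime.odd_sub_two {p : ℕ} (hp : p.Prime) (h2 : p ≠ 2) : Odd (p - 2) :=
  Nat.Odd.sub_even hp.two_le (hp.odd_of_ne_two h2) even_two

theorem sum_Icc_pow_eq_bernoulli_eval {n : ℕ} (hn : Odd n) (hn1 : 1 < n) (m : ℕ) :
    (n : ℚ) * ∑ j ∈ Icc 1 m, (j : ℚ) ^ (n - 1) = (Polynomial.bernoulli n).eval ((m : ℚ) + 1) := by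
  obtain ⟨k, rfl⟩ : ∃ k, n = k + 1 := ⟨n - 1, by omega⟩
  have hsum : ∑ j ∈ range (m + 1), (j : ℚ) ^ k = ∑ j ∈ Icc 1 m, (j : ℚ) ^ k := by
    rw [range_eq_Ico, sum_eq_sum_Ico_succ_bot (by omega : 0 < m + 1), zero_add,
      Ico_add_one_right_eq_Icc]
    simp [show k ≠ 0 by omega]
  have h := Polynomial.sum_range_pow_eq_bernoulli_sub (m + 1) k
  rw [bernoulli_eq_zero_of_odd hn hn1, sub_zero, hsum] at h
  push_cast at h ⊢
  simpa using h

theorem legendreSym_three_of_mod_three_eq_one {p : ℕ} (hp : p % 3 = 1) :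
    legendreSym 3 p = 1 := by
  rw [legendreSym.mod, show (p : ℤ) % (3 : ℕ) = 1 by omega, legendreSym.at_one]

theorem legendreSym_three_of_mod_three_eq_two {p : ℕ} (hp : p % 3 = 2) :
    legendreSym 3 p = -1 := by
  rw [legendreSym.mod, show (p : ℤ) % (3 : ℕ) = 2 by omega]
  decide

theorem norm_bernoulli_eval_add_legendreSym_mul_le {p : ℕ} [Fact p.Prime] (hp : 3 < p) :
    ‖(((Polynomial.bernoulli (p - 2)).eval (((p - 1) / 3 : ℕ) + 1 : ℚ)
        + legendreSym 3 p * (Polynomial.bernoulli (p - 2)).eval (1 / 3) : ℚ) : ℚ_[p])‖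
      ≤ (p : ℝ)⁻¹ := by
  have h3 : ‖(3 : ℚ_[p])‖ = 1 := mod_cast Padic.norm_natCast_eq_one_of_lt three_ne_zero hp
  have hm : ‖((((p - 1) / 3 : ℕ) + 1 : ℚ) : ℚ_[p])‖ ≤ 1 :=
    mod_cast Padic.norm_natCast_le_one ((p - 1) / 3 + 1)
  have hthird (k : ℕ) : ‖(((k : ℚ) / 3 : ℚ) : ℚ_[p])‖ ≤ 1 := by
    push_cast
    rw [norm_div, h3, div_one]
    exact Padic.norm_natCast_le_one k
  have hbound (k : ℕ) (hk : 3 * ((p - 1) / 3 + 1) = p + k) :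
      ‖(((Polynomial.bernoulli (p - 2)).eval (((p - 1) / 3 : ℕ) + 1 : ℚ)
        - (Polynomial.bernoulli (p - 2)).eval ((k : ℚ) / 3) : ℚ) : ℚ_[p])‖ ≤ (p : ℝ)⁻¹ := by
    refine (Padic.norm_bernoulli_eval_sub_le (by omega) hm (hthird k)).trans_eq ?_
    have hk' : (((p - 1) / 3 : ℕ) + 1 - (k : ℚ) / 3 : ℚ) = (p : ℚ) / 3 := by
      have := congrArg (Nat.cast (R := ℚ)) hk
      push_cast at this
      linarith
    rw [hk']
    push_cast
    rw [norm_div, h3, div_one, Padic.norm_p]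
  have hp3 : p % 3 ≠ 0 := fun h => by
    have := (Nat.prime_dvd_prime_iff_eq Nat.prime_three Fact.out).1 (Nat.dvd_of_mod_eq_zero h)
    omega
  have hodd : Odd (p - 2) := (Fact.out : p.Prime).odd_sub_two (by omega)
  rcases (by omega : p % 3 = 1 ∨ p % 3 = 2) with h | h
  · have hrefl := Polynomial.bernoulli_eval_one_sub (p - 2) (2 / 3)
    rw [hodd.neg_one_pow] at hrefl
    rw [legendreSym_three_of_mod_three_eq_one h]
    convert hbound 2 (by omega) using 3
    norm_num at hrefl ⊢
    rw [hrefl]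
    ring
  · rw [legendreSym_three_of_mod_three_eq_two h]
    convert hbound 1 (by omega) using 3
    norm_num
    ring

theorem sum_inv_sq_third_congruence (p : ℕ) [hp : Fact p.Prime] (hp3 : 3 < p) :
    ‖(((∑ j ∈ Finset.Icc 1 ((p - 1) / 3), (1 : ℚ) / (j : ℚ) ^ 2)
        - 1 / 2 * (legendreSym 3 p : ℚ)
            * (Polynomial.bernoulli (p - 2)).eval (1 / 3 : ℚ) : ℚ) : ℚ_[p])‖
      ≤ ((p : ℝ))⁻¹ := by
  have hST := Padic.norm_sum_inv_sq_sub_sum_pow_le hp3.le (m := (p - 1) / 3) (by omega)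
  have hT := Padic.norm_sum_natCast_pow_le_one (p := p) (Icc 1 ((p - 1) / 3)) (p - 3)
  have hfaulhaber := sum_Icc_pow_eq_bernoulli_eval
    (hp.out.odd_sub_two (by omega)) (by omega) ((p - 1) / 3)
  rw [Nat.cast_sub (by omega), show p - 2 - 1 = p - 3 by omega] at hfaulhaber
  have hB := norm_bernoulli_eval_add_legendreSym_mul_le hp3
  set S := ∑ j ∈ Icc 1 ((p - 1) / 3), (1 : ℚ) / (j : ℚ) ^ 2
  set T := ∑ j ∈ Icc 1 ((p - 1) / 3), (j : ℚ) ^ (p - 3)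
  set c := (Polynomial.bernoulli (p - 2)).eval (((p - 1) / 3 : ℕ) + 1 : ℚ)
      + legendreSym 3 p * (Polynomial.bernoulli (p - 2)).eval (1 / 3)
  have h2 : ‖(2 : ℚ_[p])‖ = 1 :=
    mod_cast Padic.norm_natCast_eq_one_of_lt (n := 2) two_ne_zero (by omega)
  have hpT : ‖((p * T : ℚ) : ℚ_[p])‖ ≤ (p : ℝ)⁻¹ := by
    rw [Rat.cast_mul, norm_mul, Rat.cast_natCast, Padic.norm_p]
    exact mul_le_of_le_one_right (by positivity) hT
  have key : 2 * (S - 1 / 2 * (legendreSym 3 p : ℚ) * (Polynomial.bernoulli (p - 2)).eval (1 / 3))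
      = 2 * (S - T) + p * T - c := by
    linear_combination -hfaulhaber
  have h2ST : ‖((2 * (S - T) : ℚ) : ℚ_[p])‖ ≤ (p : ℝ)⁻¹ := by
    rwa [Rat.cast_mul, norm_mul, Rat.cast_ofNat, h2, one_mul]
  rw [← one_mul ‖_‖, ← h2, ← norm_mul, ← Rat.cast_ofNat, ← Rat.cast_mul, key, sub_eq_add_neg,
    Rat.cast_add, Rat.cast_add, Rat.cast_neg]
  refine (IsUltrametricDist.norm_add_le_max _ _).trans (max_le ?_ (by rwa [norm_neg]))
  exact (IsUltrametricDist.norm_add_le_max _ _).trans (max_le h2ST hpT)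
end
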